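/- For an odd positive integer p, ∑_{ν=0}^{p} C(p,ν) E_ν/(p-ν+2) = 2·E_{p+2}/((p+1)(p+2)), where E_n are the Euler numbers. -/

import Mathlib

open Finset

noncomputable def eulerNumber : ℕ → ℝ
  | 0 => 1
  | n + 1 => -(1/2) * ∑ l ∈ (range (n+1)).attach, (((n+1).choose l.1 : ℕ) : ℝ) * eulerNumber l.1
  decreasing_by exact mem_range.mp l.2

/-- Euler polynomials `E_n(x)`, with generating function `2 e^{xt}/(e^t+1)`. -/
noncomputable def eulerPoly (n : ℕ) (x : ℝ) : ℝ :=
  ∑ l ∈ range (n+1), (n.choose l : ℝ) * eulerNumber l * x ^ (n - l)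

noncomputable def genocchiNumber : ℕ → ℝ
  | 0 => 0
  | n + 1 => (1/2) * ((if n = 0 then 2 else 0) -
      ∑ l ∈ (range (n+1)).attach, (((n+1).choose l.1 : ℕ) : ℝ) * genocchiNumber l.1)
  decreasing_by exact mem_range.mp l.2

/-- Genocchi polynomials `G_n(x)`, with generating function `2t e^{xt}/(e^t+1)`. -/
noncomputable def genocchiPoly (n : ℕ) (x : ℝ) : ℝ :=
  ∑ l ∈ range (n+1), (n.choose l : ℝ) * genocchiNumber l * x ^ (n - l)

/-- Signed Stirling numbers of the first kind `S₁(n,m)`. -/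
def stirlingS1 : ℕ → ℕ → ℤ
  | 0, 0 => 1
  | 0, _ + 1 => 0
  | _ + 1, 0 => 0
  | n + 1, j + 1 => stirlingS1 n j - n * stirlingS1 n (j + 1)

/-- Poly-Genocchi polynomials `G_n^{(k)}(x)` of index `k`, with generating function
`2 Ei_k(log(1+t)) e^{xt}/(e^t+1)`. -/
noncomputable def polyGenocchiPoly (k : ℤ) (n : ℕ) (x : ℝ) : ℝ :=
  ∑ j ∈ Icc 1 n, (n.choose j : ℝ) *
    (∑ m ∈ Icc 1 j, (stirlingS1 j m : ℝ) / (m : ℝ) ^ (k - 1)) * eulerPoly (n - j) x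

/-- Poly-Euler polynomials `E_n^{(k)}(x) = G_{n+1}^{(k)}(x)/(n+1)`. -/
noncomputable def polyEulerPoly (k : ℤ) (n : ℕ) (x : ℝ) : ℝ :=
  polyGenocchiPoly k (n + 1) x / (n + 1)

noncomputable def polyEulerNumber (k : ℤ) (n : ℕ) : ℝ := polyEulerPoly k n 0

/-- Euler function `Ē_p(x) = E_p(x - ⌊x⌋)`. -/
noncomputable def eulerFun (p : ℕ) (x : ℝ) : ℝ := eulerPoly p (Int.fract x)

/-- Poly-Euler function `Ē_p^{(k)}(x) = E_p^{(k)}(x - ⌊x⌋)`. -/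
noncomputable def polyEulerFun (k : ℤ) (p : ℕ) (x : ℝ) : ℝ := polyEulerPoly k p (Int.fract x)

/-- Dedekind type DC sum `T_p(h,m)`. -/
noncomputable def dcSum (p h m : ℕ) : ℝ :=
  2 * ∑ μ ∈ Icc 1 (m - 1), (-1 : ℝ) ^ μ * ((μ : ℝ) / m) * eulerFun p ((h * μ : ℝ) / m)

/-- Poly-Dedekind type DC sum `T_p^{(k)}(h,m)`. -/
noncomputable def polyDC (k : ℤ) (p h m : ℕ) : ℝ :=
  2 * ∑ μ ∈ Icc 1 (m - 1), (-1 : ℝ) ^ μ * ((μ : ℝ) / m) * polyEulerFun k p ((h * μ : ℝ) / m)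

open PowerSeries in
lemma eulerNumber_zero : eulerNumber 0 = 1 := by rw [eulerNumber]

lemma euler_rec (n : ℕ) :
    ∑ l ∈ range (n+1), (((n+1).choose l : ℕ) : ℝ) * eulerNumber l = -2 * eulerNumber (n+1) := by
  rw [eulerNumber, ← Finset.sum_attach (range (n+1)) fun l => (((n+1).choose l : ℕ) : ℝ) * eulerNumber l]
  ring

lemma euler_rec' (n : ℕ) :
    ∑ l ∈ range (n+2), (((n+1).choose l : ℕ) : ℝ) * eulerNumber l = - eulerNumber (n+1) := by
  rw [Finset.sum_range_succ, euler_rec]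
  simp
  ring

noncomputable def eulerPS : PowerSeries ℝ := PowerSeries.mk fun n => eulerNumber n / n.factorial

open PowerSeries in
lemma euler_ps : (PowerSeries.exp ℝ + 1) * eulerPS = 2 := by
  ext n
  cases n with
  | zero =>
    rw [coeff_zero_eq_constantCoeff, map_mul, map_add, map_one, constantCoeff_exp, map_ofNat]
    simp [eulerPS, eulerNumber_zero]
    norm_num
  | succ n =>
    rw [add_mul, one_mul, map_add, mul_comm, PowerSeries.coeff_mul,
      Finset.Nat.sum_antidiagonal_eq_sum_range_succ_mk]
    have hterm : ∀ k ∈ range (n+2),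
        (coeff k) eulerPS * (coeff (n+1-k)) (exp ℝ)
          = (((n+1).choose k : ℕ) : ℝ) * eulerNumber k / (n+1).factorial := by
      intro k hk
      have hk' : k ≤ n + 1 := by simpa [Nat.lt_succ_iff] using mem_range.mp hk
      rw [eulerPS, coeff_mk, coeff_exp]
      have hcast : (((n+1).choose k : ℕ) : ℝ) = (n+1).factorial / (k.factorial * (n+1-k).factorial) :=
        Nat.cast_choose ℝ hk'
      rw [hcast]
      have h1 : (k.factorial : ℝ) ≠ 0 := by positivity
      have h2 : ((n+1-k).factorial : ℝ) ≠ 0 := by positivity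
      have h3 : ((n+1).factorial : ℝ) ≠ 0 := by positivity
      simp only [eq_ratCast, Rat.cast_div, Rat.cast_one, Rat.cast_natCast]
      field_simp
    rw [Finset.sum_congr rfl hterm, ← Finset.sum_div, euler_rec' n]
    rw [show (2:ℝ⟦X⟧) = C (2:ℝ) from (map_ofNat (C (R := ℝ)) 2).symm, PowerSeries.coeff_C]
    simp [eulerPS, coeff_mk]
    ring

open PowerSeries in
lemma euler_even_eq_zero {n : ℕ} (hn : Even n) (h0 : n ≠ 0) : eulerNumber n = 0 := by
  have h1 : (exp ℝ + 1) * eulerPS = 2 := euler_ps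
  have h2 : (evalNegHom (exp ℝ) + 1) * evalNegHom eulerPS = 2 := by
    have := congrArg (evalNegHom (A := ℝ)) h1
    rwa [map_mul, map_add, map_one, map_ofNat] at this
  have h3 : exp ℝ * evalNegHom (exp ℝ) = 1 := exp_mul_exp_neg_eq_one
  have hne : (exp ℝ + 1) * (evalNegHom (exp ℝ) + 1) ≠ 0 := by
    intro h
    have := congrArg (constantCoeff (R := ℝ)) h
    rw [map_mul, map_add, map_add, map_one, map_zero, constantCoeff_exp] at this
    have hc : constantCoeff (evalNegHom (exp ℝ)) = 1 := by
      rw [evalNegHom, ← coeff_zero_eq_constantCoeff, coeff_rescale, coeff_zero_eq_constantCoeff,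
        constantCoeff_exp]
      norm_num
    rw [hc] at this
    norm_num at this
  have key : (exp ℝ + 1) * (evalNegHom (exp ℝ) + 1) * (eulerPS + evalNegHom eulerPS - 2) = 0 := by
    linear_combination (evalNegHom (exp ℝ) + 1) * h1 + (exp ℝ + 1) * h2 - 2 * h3
  have h4 : eulerPS + evalNegHom eulerPS = 2 := by
    rcases mul_eq_zero.mp key with h | h
    · exact absurd h hne
    · exact sub_eq_zero.mp h
  have h5 := congrArg (coeff (R := ℝ) n) h4
  rw [map_add, evalNegHom, coeff_rescale,
    show (2:ℝ⟦X⟧) = C (2:ℝ) from (map_ofNat (C (R := ℝ)) 2).symm, PowerSeries.coeff_C, if_neg h0] at h5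
  rw [eulerPS, coeff_mk, hn.neg_one_pow, one_mul] at h5
  have hf : (n.factorial : ℝ) ≠ 0 := by positivity
  field_simp at h5
  linarith


theorem stmt13 (p : ℕ) (hp : Odd p) :
    ∑ ν ∈ range (p + 1), (p.choose ν : ℝ) * eulerNumber ν / ((p - ν + 2 : ℕ) : ℝ) =
      2 * eulerNumber (p + 2) / (((p : ℝ) + 1) * ((p : ℝ) + 2)) := by
  have hE1 : eulerNumber (p + 1) = 0 :=
    euler_even_eq_zero (by simpa using hp.add_one) (by omega)
  have hterm : ∀ ν ∈ range (p + 1),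
      (p.choose ν : ℝ) * eulerNumber ν / ((p - ν + 2 : ℕ) : ℝ)
        = (((p+2).choose ν : ℕ) : ℝ) * (((p:ℝ) + 1) - ν) * eulerNumber ν
            / (((p : ℝ) + 1) * ((p : ℝ) + 2)) := by
    intro ν hν
    have hν' : ν ≤ p := by have := mem_range.mp hν; omega
    obtain ⟨a, rfl⟩ : ∃ a, p = ν + a := ⟨p - ν, by omega⟩
    have h1 : ((ν+a).choose ν : ℝ) * ((ν:ℝ)+a+1) = ((ν+a+1).choose ν : ℝ) * ((a:ℝ)+1) := by
      have := Nat.choose_mul_succ_eq (ν+a) ν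
      have h' : (ν + a + 1 - ν) = a + 1 := by omega
      rw [h'] at this
      exact_mod_cast congrArg (Nat.cast (R := ℝ)) this
    have h2 : ((ν+a+1).choose ν : ℝ) * ((ν:ℝ)+a+2) = ((ν+a+2).choose ν : ℝ) * ((a:ℝ)+2) := by
      have := Nat.choose_mul_succ_eq (ν+a+1) ν
      have h' : (ν + a + 1 + 1 - ν) = a + 2 := by omega
      have h'' : ν + a + 1 + 1 = ν + a + 2 := by omega
      rw [h', h''] at this
      exact_mod_cast congrArg (Nat.cast (R := ℝ)) this
    have hsub : (ν + a - ν + 2 : ℕ) = a + 2 := by omega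
    rw [hsub]
    have d1 : ((a + 2 : ℕ) : ℝ) ≠ 0 := by positivity
    have d2 : (((ν:ℝ) + a + 1) * ((ν:ℝ) + a + 2)) ≠ 0 := by positivity
    rw [div_eq_div_iff (by positivity) (by push_cast; positivity)]
    push_cast
    linear_combination eulerNumber ν * ((ν:ℝ) + a + 2) * h1
      + eulerNumber ν * ((a:ℝ)+1) * h2
  rw [Finset.sum_congr rfl hterm, ← Finset.sum_div]
  congr 1
  -- now S = 2 * E (p+2)
  have hsplit : ∀ ν ∈ range (p + 1),
      (((p+2).choose ν : ℕ) : ℝ) * (((p:ℝ) + 1) - ν) * eulerNumber ν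
        = ((p:ℝ)+2) * ((((p+1).choose ν : ℕ) : ℝ) * eulerNumber ν)
          - (((p+2).choose ν : ℕ) : ℝ) * eulerNumber ν := by
    intro ν hν
    have hν' : ν ≤ p := by have := mem_range.mp hν; omega
    have h2 : ((p+1).choose ν : ℝ) * ((p:ℝ)+2) = ((p+2).choose ν : ℝ) * (((p:ℝ)+2) - ν) := by
      have := Nat.choose_mul_succ_eq (p+1) ν
      have h' : ((p + 1 + 1 - ν : ℕ) : ℝ) = ((p:ℝ)+2) - ν := by
        rw [Nat.cast_sub (by omega)]; push_cast; ring
      calc ((p+1).choose ν : ℝ) * ((p:ℝ)+2)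
          = (((p+1).choose ν * (p+1+1) : ℕ) : ℝ) := by push_cast; ring
        _ = (((p+1+1).choose ν * (p+1+1-ν) : ℕ) : ℝ) := by rw [this]
        _ = ((p+2).choose ν : ℝ) * (((p:ℝ)+2) - ν) := by
            rw [Nat.cast_mul, h']
    linear_combination (- eulerNumber ν) * h2
  rw [Finset.sum_congr rfl hsplit, Finset.sum_sub_distrib, ← Finset.mul_sum]
  have hA := euler_rec p
  have hB : ∑ ν ∈ range (p + 1), (((p+2).choose ν : ℕ) : ℝ) * eulerNumber ν
      = -2 * eulerNumber (p+2) - ((p:ℝ)+2) * eulerNumber (p+1) := by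
    have h := euler_rec (p+1)
    rw [Finset.sum_range_succ] at h
    have hc : ((p+1+1).choose (p+1) : ℕ) = p + 2 := by
      rw [Nat.choose_succ_self_right]
    rw [hc] at h
    push_cast at h ⊢
    linarith
  rw [hA, hB, hE1]
  ring
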